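/- Let F = {2^{m+2} − 1 : m ∈ ℕ} and A = ℕ \ F. Then for every integer n ≥ 1, r(3,A,n) − r(3,A,n−1) = (n + 1) − 3⌊log₂(n+1)⌋ + 3 + 3·r(2,F,n) − (r(3,F,n) − r(3,F,n−1)), where ⌊log₂ m⌋ denotes the integer part of the base-2 logarithm of m. -/

import Mathlib

/-- `r k A n` is the number of `k`-tuples `(c₁, …, c_k)` of elements of `A`
with `c₁ + ⋯ + c_k = n`. -/
noncomputable def r (k : ℕ) (A : Set ℕ) (n : ℕ) : ℕ :=
  Set.ncard {c : Fin k → ℕ | (∀ i, c i ∈ A) ∧ ∑ i, c i = n}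

/-!
`r k A n` is the `n`-th coefficient of `f_A ^ k`, where `f_A = ∑_{a ∈ A} X^a`. With
`g = 1/(1 - X)` we have `f_{Fᶜ} = g - f_F`, and multiplying out `(1 - X) (g - f_F)^3` with
`(1 - X) g = 1` gives `g^2 - 3 f_F g + 3 f_F^2 - (1 - X) f_F^3`. Comparing `n`-th coefficients
yields the identity for an arbitrary `F`, the term `f_F g` counting the elements of `F` up
to `n`; for `F = {2^(m+2) - 1}` there are `⌊log₂ (n + 1)⌋ - 1` of them.
-/

open Finset PowerSeries

theorem PowerSeries.coeff_pow_eq_sum_antidiagonalTuple {R : Type*} [CommSemiring R]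
    (φ : R⟦X⟧) (k n : ℕ) :
    coeff n (φ ^ k) = ∑ c ∈ Nat.antidiagonalTuple k n, ∏ i, coeff (c i) φ := by
  rw [← Fin.prod_const, coeff_prod]
  refine sum_equiv Finsupp.equivFunOnFinite (fun l => ?_) (fun _ _ => rfl)
  simp [Nat.mem_antidiagonalTuple]

noncomputable def indicatorSeries (R : Type*) [Semiring R] (A : Set ℕ) : R⟦X⟧ :=
  PowerSeries.mk (A.indicator 1)

theorem r_eq_coeff_pow (R : Type*) [CommSemiring R] (k : ℕ) (A : Set ℕ) (n : ℕ) :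
    (r k A n : R) = coeff n (indicatorSeries R A ^ k) := by
  classical
  have hset : {c : Fin k → ℕ | (∀ i, c i ∈ A) ∧ ∑ i, c i = n}
      = ↑((Nat.antidiagonalTuple k n).filter fun c => ∀ i, c i ∈ A) := by
    ext c
    simp [Nat.mem_antidiagonalTuple, and_comm]
  rw [coeff_pow_eq_sum_antidiagonalTuple, r, hset, Set.ncard_coe_finset, card_filter]
  push_cast
  refine sum_congr rfl fun c _ => ?_
  simp [indicatorSeries, Set.indicator_apply, prod_boole]

theorem coeff_succ_one_sub_X_mul {R : Type*} [CommRing R] (φ : R⟦X⟧) (n : ℕ) :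
    coeff (n + 1) ((1 - X) * φ) = coeff (n + 1) φ - coeff n φ := by
  rw [sub_mul, one_mul, map_sub, coeff_succ_X_mul]

theorem coeff_mk_one_sq {R : Type*} [CommRing R] (n : ℕ) :
    coeff n ((PowerSeries.mk 1 : R⟦X⟧) ^ 2) = (n + 1 : R) := by
  rw [← one_add_one_eq_two, mk_one_pow_eq_mk_choose_add, coeff_mk, Nat.choose_one_right]
  push_cast
  ring

theorem coeff_indicatorSeries_mul_mk_one {R : Type*} [CommSemiring R] (F : Set ℕ)
    [DecidablePred (· ∈ F)] (n : ℕ) :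
    coeff n (indicatorSeries R F * PowerSeries.mk 1) =
      (#{j ∈ range (n + 1) | j ∈ F} : R) := by
  rw [coeff_mul, Nat.sum_antidiagonal_eq_sum_range_succ_mk, card_filter]
  push_cast
  refine sum_congr rfl fun j _ => ?_
  simp [indicatorSeries, Set.indicator_apply]

theorem indicatorSeries_compl {R : Type*} [Ring R] (A : Set ℕ) :
    indicatorSeries R Aᶜ = PowerSeries.mk 1 - indicatorSeries R A := by
  ext j
  simp [indicatorSeries, Set.indicator_compl]

theorem one_sub_X_mul_mk_one_sub_pow_three {R : Type*} [CommRing R] (f : R⟦X⟧) :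
    (1 - X) * (PowerSeries.mk 1 - f) ^ 3 =
      PowerSeries.mk 1 ^ 2 - C 3 * (f * PowerSeries.mk 1) + C 3 * f ^ 2 - (1 - X) * f ^ 3 := by
  rw [map_ofNat]
  linear_combination (PowerSeries.mk 1 ^ 2 - 3 * PowerSeries.mk 1 * f + 3 * f ^ 2) *
    mk_one_mul_one_sub_eq_one (S := R)

theorem r_three_compl_succ_sub (F : Set ℕ) [DecidablePred (· ∈ F)] (n : ℕ) :
    (r 3 Fᶜ (n + 1) : ℤ) - r 3 Fᶜ n =
      (n + 2) - 3 * #{j ∈ range (n + 2) | j ∈ F} + 3 * r 2 F (n + 1)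
        - (r 3 F (n + 1) - r 3 F n) := by
  have hcoeff := congrArg (coeff (n + 1))
    (one_sub_X_mul_mk_one_sub_pow_three (indicatorSeries ℤ F))
  simp only [coeff_succ_one_sub_X_mul, map_add, map_sub, coeff_C_mul, coeff_mk_one_sq,
    coeff_indicatorSeries_mul_mk_one] at hcoeff
  simp only [r_eq_coeff_pow ℤ, indicatorSeries_compl]
  push_cast at hcoeff
  linear_combination hcoeff

theorem card_filter_range_mem_two_pow_sub_one (F : Set ℕ)
    (hF : F = {x : ℕ | ∃ m : ℕ, x = 2 ^ (m + 2) - 1}) [DecidablePred (· ∈ F)] (n : ℕ) :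
    #{j ∈ range (n + 2) | j ∈ F} = Nat.log 2 (n + 2) - 1 := by
  have hlt (m : ℕ) : 2 ^ (m + 2) - 1 < n + 2 ↔ m < Nat.log 2 (n + 2) - 1 := by
    have hpos : 1 ≤ 2 ^ (m + 2) := Nat.one_le_two_pow
    have := Nat.le_log_iff_pow_le (b := 2) (x := m + 2) (y := n + 2) one_lt_two (by omega)
    omega
  have hinj : Function.Injective fun m : ℕ => 2 ^ (m + 2) - 1 := by
    intro a b hab
    have := Nat.pow_right_injective le_rfl
      (Nat.sub_one_cancel Nat.one_le_two_pow Nat.one_le_two_pow hab)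
    omega
  have himage : {j ∈ range (n + 2) | j ∈ F} =
      (range (Nat.log 2 (n + 2) - 1)).image fun m => 2 ^ (m + 2) - 1 := by
    ext j
    simp only [mem_filter, mem_range, mem_image, hF, Set.mem_ofPred_eq]
    constructor
    · rintro ⟨hj, m, rfl⟩
      exact ⟨m, (hlt m).1 hj, rfl⟩
    · rintro ⟨m, hm, rfl⟩
      exact ⟨(hlt m).2 hm, m, rfl⟩
  rw [himage, card_image_of_injective _ hinj, card_range]

theorem stmt_7 (F : Set ℕ) (hF : F = {x : ℕ | ∃ m : ℕ, x = 2 ^ (m + 2) - 1})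
    (A : Set ℕ) (hA : A = Set.univ \ F) :
    ∀ n : ℕ, 1 ≤ n →
      (r 3 A n : ℤ) - (r 3 A (n - 1) : ℤ) =
        ((n : ℤ) + 1) - 3 * (Nat.log 2 (n + 1) : ℤ) + 3 + 3 * (r 2 F n : ℤ)
          - ((r 3 F n : ℤ) - (r 3 F (n - 1) : ℤ)) := by
  classical
  intro n hn
  obtain ⟨m, rfl⟩ : ∃ m, n = m + 1 := ⟨n - 1, by omega⟩
  have hlog : 1 ≤ Nat.log 2 (m + 2) := Nat.le_log_of_pow_le one_lt_two (by omega)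
  rw [hA, ← Set.compl_eq_univ_sdiff, Nat.add_sub_cancel, r_three_compl_succ_sub,
    card_filter_range_mem_two_pow_sub_one F hF]
  push_cast [hlog]
  ring
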